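/- arXiv:2502.02012 — 4 statements merged into one kernel-verified Lean document; each statement's English description precedes it below -/
import Mathlib

section
/- Let a, a', b, b' be complex numbers and let k ≥ 1 and ω₀ = e^{2πi/k}. Suppose that for every k-th root of unity ω, (a + ωb)^k = (ωa' + b')^k. Then a^k + b^k = a'^k + b'^k and, for every 1 ≤ i ≤ k−1, a^{k−i} b^i = a'^i b'^{k−i}. -/
/-!
`P(X) = (a + bX)^k - (b' + a'X)^k` has degree at most `k` and vanishes at the `k` distinct
`k`-th roots of unity, so it is a constant multiple of `X^k - 1`. Hence its middle coefficients
`C(k,i) (a^{k-i} b^i - a'^i b'^{k-i})` vanish and its constant coefficient `a^k - b'^k` is minus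
its leading coefficient `b^k - a'^k`.
-/

open Polynomial Finset

theorem Polynomial.coeff_C_add_C_mul_X_pow {R : Type*} [CommSemiring R] (a b : R) (n i : ℕ) :
    ((C a + C b * X) ^ n).coeff i = n.choose i * a ^ (n - i) * b ^ i := by
  have hterm (j : ℕ) : ((C b * X) ^ j * C a ^ (n - j) * (n.choose j : R[X])).coeff i =
      if i = j then n.choose j * a ^ (n - j) * b ^ j else 0 := by
    rw [mul_pow, ← C_pow, ← C_pow, ← C_eq_natCast, mul_comm, ← mul_assoc, ← mul_assoc,
      ← C_mul, coeff_mul_C, coeff_C_mul_X_pow]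
    split_ifs <;> ring
  rw [add_comm, add_pow, finsetSum_coeff, sum_eq_single i (fun j _ hji ↦ by simp [hterm, hji.symm])]
  · simp [hterm]
  · intro hi
    simp [Nat.choose_eq_zero_of_lt (by simpa using hi : n < i)]

theorem IsPrimitiveRoot.eq_C_coeff_mul_X_pow_sub_one {R : Type*} [CommRing R] [IsDomain R]
    {ζ : R} {k : ℕ} (hζ : IsPrimitiveRoot ζ k) (hk : 0 < k) {p : R[X]} (hp : p.natDegree ≤ k)
    (hroots : ∀ ω : R, ω ^ k = 1 → p.eval ω = 0) :
    p = C (p.coeff k) * (X ^ k - 1) := by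
  rw [← sub_eq_zero]
  refine eq_zero_of_natDegree_lt_card_of_eval_eq_zero' _ (nthRootsFinset k (1 : R)) ?_ ?_
  · intro ω hω
    rw [Polynomial.mem_nthRootsFinset hk] at hω
    simp [hroots ω hω, hω]
  · have hle : (p - C (p.coeff k) * (X ^ k - 1)).natDegree ≤ k :=
      (natDegree_sub_le _ _).trans (max_le hp ((natDegree_C_mul_le _ _).trans (by compute_degree)))
    have hcoeff : (p - C (p.coeff k) * (X ^ k - 1)).coeff k = 0 := by
      simp [coeff_one, hk.ne']
    have := natDegree_le_pred hle hcoeff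
    rw [hζ.card_nthRootsFinset]
    omega

theorem stmt_4_general (k : ℕ) (hk : 1 ≤ k) (a b a' b' : ℂ)
    (h : ∀ ω : ℂ, ω ^ k = 1 → (a + ω * b) ^ k = (ω * a' + b') ^ k) :
    a ^ k + b ^ k = a' ^ k + b' ^ k ∧
      ∀ i : ℕ, 1 ≤ i → i ≤ k - 1 →
        a ^ (k - i) * b ^ i = a' ^ i * b' ^ (k - i) := by
  set P : ℂ[X] := (C a + C b * X) ^ k - (C b' + C a' * X) ^ k
  have hcoeff (i : ℕ) : P.coeff i = k.choose i * (a ^ (k - i) * b ^ i - a' ^ i * b' ^ (k - i)) := by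
    rw [coeff_sub, coeff_C_add_C_mul_X_pow, coeff_C_add_C_mul_X_pow]
    ring
  have hdeg : P.natDegree ≤ k := by
    unfold P
    compute_degree
  have hroots (ω : ℂ) (hω : ω ^ k = 1) : P.eval ω = 0 := by
    simp only [P, eval_sub, eval_pow, eval_add, eval_mul, eval_C, eval_X]
    rw [mul_comm b, mul_comm a', add_comm b', h ω hω, sub_self]
  have hP := (Complex.isPrimitiveRoot_exp k (by omega)).eq_C_coeff_mul_X_pow_sub_one hk hdeg hroots
  rw [hcoeff] at hP
  refine ⟨?_, fun i hi hik ↦ ?_⟩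
  · have hconst := congrArg (coeff · 0) hP
    simp only [coeff_C_mul, coeff_sub, coeff_X_pow, coeff_one, hcoeff] at hconst
    have hk0 : 0 ≠ k := by omega
    simp [hk0] at hconst
    linear_combination hconst
  · have hmiddle := congrArg (coeff · i) hP
    simp only [coeff_C_mul, coeff_sub, coeff_X_pow, coeff_one, hcoeff] at hmiddle
    have hik' : i ≠ k := by omega
    have hi0 : i ≠ 0 := by omega
    simpa [hik', hi0, (Nat.choose_pos (by omega : i ≤ k)).ne', sub_eq_zero] using hmiddle

/-- If (a + ωb)^k = (ωa' + b')^k for every k-th root of unity ω, then the binomial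
coefficient differences all vanish: a^k + b^k = a'^k + b'^k and
a^{k-i} b^i = a'^i b'^{k-i} for 1 ≤ i ≤ k-1. -/
theorem stmt_4 (k : ℕ) (hk : 1 ≤ k) (a b a' b' : ℂ)
    (ω₀ : ℂ) (hω₀ : ω₀ = Complex.exp (2 * Real.pi * Complex.I / k))
    (h : ∀ ω : ℂ, ω ^ k = 1 → (a + ω * b) ^ k = (ω * a' + b') ^ k) :
    a ^ k + b ^ k = a' ^ k + b' ^ k ∧
      ∀ i : ℕ, 1 ≤ i → i ≤ k - 1 →
        a ^ (k - i) * b ^ i = a' ^ i * b' ^ (k - i) :=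
  stmt_4_general k hk a b a' b' h
end

section
/- Let f : {0,1}^{2d} → ℂ be an EO signature (f(α) = 0 unless α has exactly d ones) with 2d > 2, nontrivial (not identically zero). Then there exist two indices i ≠ j such that the signature g obtained by adding a self-loop on variables x_i, x_j — namely g(rest) = f with (x_i,x_j) = (0,1) plus f with (x_i,x_j) = (1,0) — is not identically zero. -/
/-- For a nontrivial EO signature of arity 2d > 2, some self-loop yields a nontrivial
signature. -/
theorem stmt_8 (d : ℕ) (hd : 2 < 2 * d) (f : (Fin (2 * d) → Bool) → ℂ)
    (hEO : ∀ α, f α ≠ 0 → (Finset.univ.filter (fun i => α i = true)).card = d)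
    (hnt : ∃ α, f α ≠ 0) :
    ∃ i j : Fin (2 * d), i ≠ j ∧
      ∃ y : Fin (2 * d) → Bool,
        f (Function.update (Function.update y i false) j true) +
          f (Function.update (Function.update y i true) j false) ≠ 0 := by
  obtain ⟨α, hα⟩ := hnt
  have hcard := hEO α hα
  have hd2 : 2 ≤ d := by omega
  -- a position with a one
  have hpos : 0 < (Finset.univ.filter (fun i => α i = true)).card := by omega
  obtain ⟨p1, hp1mem⟩ := Finset.card_pos.mp hpos
  have hp1 : α p1 = true := (Finset.mem_filter.mp hp1mem).2
  -- two positions with zeros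
  have hzc : (Finset.univ.filter (fun i => α i = false)).card = d := by
    have := Finset.card_filter_add_card_filter_not
      (s := (Finset.univ : Finset (Fin (2 * d)))) (p := fun i => α i = true)
    have hfalse : (Finset.univ.filter (fun i => ¬ α i = true))
        = (Finset.univ.filter (fun i => α i = false)) := by
      apply Finset.filter_congr; intro i _; simp
    rw [hfalse, hcard] at this
    simp only [Finset.card_univ, Fintype.card_fin] at this
    omega
  have h1lt : 1 < (Finset.univ.filter (fun i => α i = false)).card := by omega
  obtain ⟨p2, hp2mem, p3, hp3mem, hne23⟩ := Finset.one_lt_card.mp h1lt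
  have hp2 : α p2 = false := (Finset.mem_filter.mp hp2mem).2
  have hp3 : α p3 = false := (Finset.mem_filter.mp hp3mem).2
  have hne12 : p1 ≠ p2 := fun h => by rw [h, hp2] at hp1; exact absurd hp1 (by simp)
  have hne13 : p1 ≠ p3 := fun h => by rw [h, hp3] at hp1; exact absurd hp1 (by simp)
  -- key function equalities
  have e2 : Function.update (Function.update α p2 false) p1 true = α := by
    rw [show (false : Bool) = α p2 from hp2.symm, Function.update_eq_self,
      show (true : Bool) = α p1 from hp1.symm, Function.update_eq_self]
  have e3 : Function.update (Function.update α p3 false) p1 true = α := by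
    rw [show (false : Bool) = α p3 from hp3.symm, Function.update_eq_self,
      show (true : Bool) = α p1 from hp1.symm, Function.update_eq_self]
  set β := f (Function.update (Function.update α p2 true) p1 false) with hβ
  set γ := f (Function.update (Function.update α p3 true) p1 false) with hγ
  by_cases hc1 : f α + β ≠ 0
  · exact ⟨p2, p1, hne12.symm, α, by rw [e2]; exact hc1⟩
  by_cases hc2 : f α + γ ≠ 0
  · exact ⟨p3, p1, hne13.symm, α, by rw [e3]; exact hc2⟩
  push_neg at hc1 hc2
  refine ⟨p3, p2, hne23.symm, Function.update α p1 false, ?_⟩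
  have e4 : Function.update (Function.update (Function.update α p1 false) p3 false) p2 true
      = Function.update (Function.update α p2 true) p1 false := by
    funext x
    rcases eq_or_ne x p1 with h1 | h1 <;> rcases eq_or_ne x p2 with h2 | h2 <;>
      rcases eq_or_ne x p3 with h3 | h3 <;>
      simp_all [Function.update_apply]
  have e5 : Function.update (Function.update (Function.update α p1 false) p3 true) p2 false
      = Function.update (Function.update α p3 true) p1 false := by
    funext x
    rcases eq_or_ne x p1 with h1 | h1 <;> rcases eq_or_ne x p2 with h2 | h2 <;>
      rcases eq_or_ne x p3 with h3 | h3 <;>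
      simp_all [Function.update_apply]
  rw [e4, e5, ← hβ, ← hγ]
  have hb : β = -f α := by linear_combination hc1
  have hg : γ = -f α := by linear_combination hc2
  rw [hb, hg]
  intro h
  apply hα
  have : (-2 : ℂ) * f α = 0 := by linear_combination h
  simpa using this
end

section
/- Let S ⊆ {0,1}^{2d} be a nonempty affine subset (closed under triple-wise XOR: α,β,γ ∈ S implies α⊕β⊕γ ∈ S) all of whose elements have Hamming weight exactly d. Then there exists a perfect pairing P of the 2d coordinates — a partition into d pairs {i₁,j₁},…,{i_d,j_d} — such that every α ∈ S satisfies α_{i_k} ≠ α_{j_k} for all k. -/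
namespace Stmt11Aux


variable {n : ℕ}

/-- Sign character: `-1` for `true`, `1` for `false`. -/
def chi (α : Fin n → Bool) (i : Fin n) : ℤ := if α i then -1 else 1

lemma chi_ne_zero (α : Fin n → Bool) (i : Fin n) : chi α i ≠ 0 := by
  unfold chi; cases α i <;> simp

lemma chi_mul (α β : Fin n → Bool) (i : Fin n) :
    chi α i * chi β i = if α i = β i then 1 else -1 := by
  unfold chi; cases α i <;> cases β i <;> simp

/-- "always equal" relation on coordinates -/
def Peq (T : Finset (Fin n → Bool)) (i j : Fin n) : Prop := ∀ α ∈ T, α j = α i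

/-- "always opposite" relation on coordinates -/
def Pop (T : Finset (Fin n → Bool)) (i j : Fin n) : Prop := ∀ α ∈ T, α j ≠ α i

instance (T : Finset (Fin n → Bool)) (i j : Fin n) : Decidable (Peq T i j) := by
  unfold Peq; infer_instance

instance (T : Finset (Fin n → Bool)) (i j : Fin n) : Decidable (Pop T i j) := by
  unfold Pop; infer_instance

/-- signed indicator of the relation -/
def sgn (T : Finset (Fin n → Bool)) (i j : Fin n) : ℤ :=
  if Peq T i j then 1 else if Pop T i j then -1 else 0

lemma sum_chi {d : ℕ} (α : Fin (2*d) → Bool)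
    (hw : (Finset.univ.filter (fun i => α i = true)).card = d) :
    ∑ i, chi α i = 0 := by
  have hsplit := Finset.sum_filter_add_sum_filter_not Finset.univ
    (fun i => α i = true) (chi α)
  have h1 : ∑ i ∈ Finset.univ.filter (fun i => α i = true), chi α i = -(d : ℤ) := by
    have hc : ∀ i ∈ Finset.univ.filter (fun i => α i = true), chi α i = (-1 : ℤ) :=
      fun i hi => by simp [chi, (Finset.mem_filter.mp hi).2]
    rw [Finset.sum_congr rfl hc, Finset.sum_const, hw]; simp
  have hcard2 : (Finset.univ.filter (fun i => ¬ (α i = true))).card = d := by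
    have := Finset.card_filter_add_card_filter_not
      (s := (Finset.univ : Finset (Fin (2*d)))) (p := fun i => α i = true)
    simp only [Finset.card_univ, Fintype.card_fin] at this
    omega
  have h2 : ∑ i ∈ Finset.univ.filter (fun i => ¬ (α i = true)), chi α i = (d : ℤ) := by
    have hc : ∀ i ∈ Finset.univ.filter (fun i => ¬ (α i = true)), chi α i = (1 : ℤ) := by
      intro i hi
      have h := (Finset.mem_filter.mp hi).2
      simp only [Bool.not_eq_true] at h
      simp [chi, h]
    rw [Finset.sum_congr rfl hc, Finset.sum_const, hcard2]; simp
  rw [← hsplit, h1, h2]; ring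


lemma bool_flip (bi bj gi gj ai aj : Bool) (h1 : bj = bi) (h2 : gj ≠ gi) :
    (if xor (xor bi gi) ai then (-1:ℤ) else 1) * (if xor (xor bj gj) aj then (-1:ℤ) else 1)
      = -((if ai then (-1:ℤ) else 1) * (if aj then (-1:ℤ) else 1)) := by
  subst h1
  cases bj <;> cases gi <;> cases gj <;> cases ai <;> cases aj <;> simp_all

lemma bool_fix (bi bj gi gj ai aj : Bool) (h1 : bj = bi) (h2 : gj ≠ gi)
    (e1 : xor (xor bi gi) ai = ai) (e2 : xor (xor bj gj) aj = aj) : False := by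
  subst h1
  cases bj <;> cases gi <;> cases gj <;> cases ai <;> cases aj <;> simp_all

lemma sum_zero_of_mixed (T : Finset (Fin n → Bool))
    (haff : ∀ α ∈ T, ∀ β ∈ T, ∀ γ ∈ T, (fun i => xor (xor (α i) (β i)) (γ i)) ∈ T)
    {i j : Fin n} {β γ : Fin n → Bool} (hβ : β ∈ T) (hγ : γ ∈ T)
    (hβe : β j = β i) (hγo : γ j ≠ γ i) :
    ∑ α ∈ T, chi α i * chi α j = 0 := by
  have g_mem : ∀ a ∈ T, (fun k => xor (xor (β k) (γ k)) (a k)) ∈ T := by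
    intro a ha
    exact haff β hβ γ hγ a ha
  refine Finset.sum_involution (fun a _ => fun k => xor (xor (β k) (γ k)) (a k)) ?_ ?_ g_mem ?_
  · intro a ha
    have := bool_flip (β i) (β j) (γ i) (γ j) (a i) (a j) hβe hγo
    simp only [chi]
    omega
  · intro a ha _
    intro h
    exact bool_fix (β i) (β j) (γ i) (γ j) (a i) (a j) hβe hγo
      (congrFun h i) (congrFun h j)
  · intro a ha
    funext k
    show xor (xor (β k) (γ k)) (xor (xor (β k) (γ k)) (a k)) = a k
    cases β k <;> cases γ k <;> cases a k <;> rfl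


lemma chi_mul2 (α : Fin n → Bool) (i j : Fin n) :
    chi α i * chi α j = if α j = α i then 1 else -1 := by
  unfold chi; cases α i <;> cases α j <;> simp

lemma t_eq (T : Finset (Fin n → Bool))
    (haff : ∀ α ∈ T, ∀ β ∈ T, ∀ γ ∈ T, (fun i => xor (xor (α i) (β i)) (γ i)) ∈ T)
    (i j : Fin n) :
    ∑ α ∈ T, chi α i * chi α j = (T.card : ℤ) * sgn T i j := by
  by_cases he : Peq T i j
  · rw [sgn, if_pos he, mul_one]
    have hterm : ∀ α ∈ T, chi α i * chi α j = 1 := fun α hα => by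
      rw [chi_mul2, if_pos (he α hα)]
    rw [Finset.sum_congr rfl hterm, Finset.sum_const, nsmul_eq_mul, mul_one]
  · by_cases ho : Pop T i j
    · rw [sgn, if_neg he, if_pos ho]
      have hterm : ∀ α ∈ T, chi α i * chi α j = -1 := fun α hα => by
        rw [chi_mul2, if_neg (ho α hα)]
      rw [Finset.sum_congr rfl hterm, Finset.sum_const, nsmul_eq_mul]
    · rw [sgn, if_neg he, if_neg ho, mul_zero]
      rw [Peq, not_forall] at he
      obtain ⟨γ, hγ⟩ := he
      rw [not_forall] at hγ
      obtain ⟨hγT, hγo⟩ := hγ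
      rw [Pop, not_forall] at ho
      obtain ⟨β, hβ⟩ := ho
      rw [not_forall] at hβ
      obtain ⟨hβT, hβo⟩ := hβ
      rw [not_not] at hβo
      exact sum_zero_of_mixed T haff hβT hγT hβo hγo


lemma sum_sgn_eq_zero {d : ℕ} (T : Finset (Fin (2*d) → Bool)) (hne : T.Nonempty)
    (haff : ∀ α ∈ T, ∀ β ∈ T, ∀ γ ∈ T, (fun i => xor (xor (α i) (β i)) (γ i)) ∈ T)
    (hwt : ∀ α ∈ T, (Finset.univ.filter (fun i => α i = true)).card = d) :
    ∑ i, ∑ j, sgn T i j = 0 := by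
  have key : (T.card : ℤ) * ∑ i, ∑ j, sgn T i j = 0 := by
    calc (T.card : ℤ) * ∑ i, ∑ j, sgn T i j
        = ∑ i, ∑ j, (T.card : ℤ) * sgn T i j := by
          rw [Finset.mul_sum]; exact Finset.sum_congr rfl fun i _ => Finset.mul_sum _ _ _
      _ = ∑ i, ∑ j, ∑ α ∈ T, chi α i * chi α j := by
          exact Finset.sum_congr rfl fun i _ => Finset.sum_congr rfl fun j _ =>
            (t_eq T haff i j).symm
      _ = ∑ i, ∑ α ∈ T, ∑ j, chi α i * chi α j :=
          Finset.sum_congr rfl fun i _ => Finset.sum_comm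
      _ = ∑ α ∈ T, ∑ i, ∑ j, chi α i * chi α j := Finset.sum_comm
      _ = ∑ α ∈ T, (∑ i, chi α i) * (∑ j, chi α j) :=
          Finset.sum_congr rfl fun α _ => (Finset.sum_mul_sum _ _ _ _).symm
      _ = 0 := Finset.sum_eq_zero fun α hα => by rw [sum_chi α (hwt α hα), zero_mul]
  have hc : (T.card : ℤ) ≠ 0 := by
    simp [Finset.card_ne_zero_of_mem hne.choose_spec]
  exact (mul_eq_zero.mp key).resolve_left hc


/-- class of a coordinate -/
def Fcl (T : Finset (Fin n → Bool)) (i : Fin n) : Finset (Fin n) :=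
  Finset.univ.filter (fun j => Peq T i j ∨ Pop T i j)
def Ecl (T : Finset (Fin n → Bool)) (i : Fin n) : Finset (Fin n) :=
  Finset.univ.filter (fun j => Peq T i j)
def Ocl (T : Finset (Fin n → Bool)) (i : Fin n) : Finset (Fin n) :=
  Finset.univ.filter (fun j => Pop T i j)

section trans
variable (T : Finset (Fin n → Bool)) (i j k : Fin n)

lemma peq_refl : Peq T i i := fun α _ => rfl
lemma mem_Ecl_self : i ∈ Ecl T i := Finset.mem_filter.mpr ⟨Finset.mem_univ i, peq_refl T i⟩
lemma mem_Fcl_self : i ∈ Fcl T i := Finset.mem_filter.mpr ⟨Finset.mem_univ i, Or.inl (peq_refl T i)⟩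

lemma mem_Ecl : j ∈ Ecl T i ↔ Peq T i j := by simp [Ecl]
lemma mem_Ocl : j ∈ Ocl T i ↔ Pop T i j := by simp [Ocl]
lemma mem_Fcl : j ∈ Fcl T i ↔ Peq T i j ∨ Pop T i j := by simp [Fcl]

lemma peq_trans_peq (h1 : Peq T i j) (h2 : Peq T j k) : Peq T i k := fun α hα =>
  (h2 α hα).trans (h1 α hα)
lemma peq_trans_pop (h1 : Peq T i j) (h2 : Pop T j k) : Pop T i k := fun α hα h =>
  h2 α hα (h.trans (h1 α hα).symm)
lemma pop_trans_peq (h1 : Pop T i j) (h2 : Peq T j k) : Pop T i k := fun α hα h =>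
  h1 α hα ((h2 α hα).symm.trans h)
lemma pop_trans_pop (h1 : Pop T i j) (h2 : Pop T j k) : Peq T i k := fun α hα => by
  have e1 := h1 α hα; have e2 := h2 α hα
  revert e1 e2; cases α i <;> cases α j <;> cases α k <;> simp

lemma pop_symm (h : Pop T i j) : Pop T j i := fun α hα h2 => h α hα h2.symm
lemma peq_symm (h : Peq T i j) : Peq T j i := fun α hα => (h α hα).symm

lemma Ecl_peq (h : Peq T i j) : Ecl T j = Ecl T i := by
  ext k
  simp only [mem_Ecl]
  exact ⟨fun h2 => peq_trans_peq T i j k h h2, fun h2 => peq_trans_peq T j i k (peq_symm T i j h) h2⟩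
lemma Ocl_peq (h : Peq T i j) : Ocl T j = Ocl T i := by
  ext k
  simp only [mem_Ocl]
  exact ⟨fun h2 => peq_trans_pop T i j k h h2, fun h2 => peq_trans_pop T j i k (peq_symm T i j h) h2⟩
lemma Ecl_pop (h : Pop T i j) : Ecl T j = Ocl T i := by
  ext k
  simp only [mem_Ecl, mem_Ocl]
  exact ⟨fun h2 => pop_trans_peq T i j k h h2, fun h2 => pop_trans_pop T j i k (pop_symm T i j h) h2⟩
lemma Ocl_pop (h : Pop T i j) : Ocl T j = Ecl T i := by
  ext k
  simp only [mem_Ocl, mem_Ecl]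
  exact ⟨fun h2 => pop_trans_pop T i j k h h2, fun h2 => pop_trans_peq T j i k (pop_symm T i j h) h2⟩

lemma Fcl_eq_of_mem (h : j ∈ Fcl T i) : Fcl T j = Fcl T i := by
  rcases (mem_Fcl T i j).mp h with he | ho
  · ext k; simp only [mem_Fcl]
    constructor
    · rintro (h2 | h2)
      · exact Or.inl (peq_trans_peq T i j k he h2)
      · exact Or.inr (peq_trans_pop T i j k he h2)
    · rintro (h2 | h2)
      · exact Or.inl (peq_trans_peq T j i k (peq_symm T i j he) h2)
      · exact Or.inr (peq_trans_pop T j i k (peq_symm T i j he) h2)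
  · ext k; simp only [mem_Fcl]
    constructor
    · rintro (h2 | h2)
      · exact Or.inr (pop_trans_peq T i j k ho h2)
      · exact Or.inl (pop_trans_pop T i j k ho h2)
    · rintro (h2 | h2)
      · exact Or.inr (pop_trans_peq T j i k (pop_symm T i j ho) h2)
      · exact Or.inl (pop_trans_pop T j i k (pop_symm T i j ho) h2)

end trans

section main
variable (T : Finset (Fin n → Bool)) {α₀ : Fin n → Bool} (hα₀ : α₀ ∈ T)
include hα₀

lemma not_peq_and_pop (i j : Fin n) : ¬ (Peq T i j ∧ Pop T i j) := by
  rintro ⟨h1, h2⟩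
  exact h2 α₀ hα₀ (h1 α₀ hα₀)

lemma chi_eq_of_peq {i j : Fin n} (h : Peq T i j) : chi α₀ j = chi α₀ i := by
  unfold chi; rw [h α₀ hα₀]

lemma chi_eq_of_pop {i j : Fin n} (h : Pop T i j) : chi α₀ j = -chi α₀ i := by
  have := h α₀ hα₀
  unfold chi
  revert this
  cases α₀ i <;> cases α₀ j <;> simp

omit hα₀ in
lemma chi_sq (i : Fin n) : chi α₀ i * chi α₀ i = 1 := by
  unfold chi; cases α₀ i <;> norm_num

lemma sgn_eq (i j : Fin n) :
    sgn T i j = if j ∈ Fcl T i then chi α₀ i * chi α₀ j else 0 := by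
  by_cases he : Peq T i j
  · rw [sgn, if_pos he, if_pos ((mem_Fcl T i j).mpr (Or.inl he)),
      chi_eq_of_peq T hα₀ he, chi_sq]
  · by_cases ho : Pop T i j
    · rw [sgn, if_neg he, if_pos ho, if_pos ((mem_Fcl T i j).mpr (Or.inr ho)),
        chi_eq_of_pop T hα₀ ho]
      rw [mul_neg, chi_sq]
    · rw [sgn, if_neg he, if_neg ho, if_neg (fun h => ?_)]
      rcases (mem_Fcl T i j).mp h with h | h
      exacts [he h, ho h]

/-- weighted class sum -/
def W (F : Finset (Fin n)) : ℤ := ∑ j ∈ F, (if α₀ j then (-1:ℤ) else 1)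

omit hα₀ in
lemma W_eq (F : Finset (Fin n)) : W (α₀ := α₀) F = ∑ j ∈ F, chi α₀ j := rfl

lemma row_sum (i : Fin n) : ∑ j, sgn T i j = chi α₀ i * W (α₀ := α₀) (Fcl T i) := by
  rw [W_eq, Finset.mul_sum]
  rw [Finset.sum_congr rfl (fun j _ => sgn_eq T hα₀ i j)]
  rw [Finset.sum_ite_mem, Finset.univ_inter]

lemma all_W_zero (hsum : ∑ i, ∑ j, sgn T i j = 0) (i : Fin n) :
    W (α₀ := α₀) (Fcl T i) = 0 := by
  classical
  set C : Finset (Finset (Fin n)) := Finset.univ.image (fun i => Fcl T i) with hC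
  have hdisj : (C : Set (Finset (Fin n))).PairwiseDisjoint id := by
    intro F1 h1 F2 h2 hne
    simp only [hC, Finset.coe_image, Set.mem_image] at h1 h2
    obtain ⟨a, _, rfl⟩ := h1
    obtain ⟨b, _, rfl⟩ := h2
    simp only [Function.onFun, id_eq]
    rw [Finset.disjoint_left]
    intro k hk1 hk2
    exact hne (((Fcl_eq_of_mem T a k hk1).symm).trans (Fcl_eq_of_mem T b k hk2))
  have hcover : C.biUnion id = Finset.univ := by
    apply Finset.eq_univ_of_forall
    intro k
    apply Finset.mem_biUnion.mpr
    exact ⟨Fcl T k, Finset.mem_image_of_mem _ (Finset.mem_univ k), mem_Fcl_self T k⟩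
  have hsum2 : ∑ F ∈ C, (W (α₀ := α₀) F) ^ 2 = 0 := by
    have := (Finset.sum_biUnion hdisj (f := fun i => chi α₀ i * W (α₀ := α₀) (Fcl T i)))
    rw [hcover] at this
    have hrows : ∑ i, chi α₀ i * W (α₀ := α₀) (Fcl T i) = 0 := by
      rw [← hsum]
      exact (Finset.sum_congr rfl fun i _ => (row_sum T hα₀ i).symm)
    rw [← hrows, this]
    apply Finset.sum_congr rfl
    intro F hF
    simp only [hC, Finset.mem_image] at hF
    obtain ⟨a, _, rfl⟩ := hF
    have : ∀ x ∈ id (Fcl T a), chi α₀ x * W (α₀ := α₀) (Fcl T x)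
        = chi α₀ x * W (α₀ := α₀) (Fcl T a) := by
      intro x hx
      rw [Fcl_eq_of_mem T a x hx]
    simp only [id_eq] at this ⊢
    rw [Finset.sum_congr rfl this, ← Finset.sum_mul, ← W_eq, sq]
  have hmem : Fcl T i ∈ C := Finset.mem_image_of_mem _ (Finset.mem_univ i)
  have hz := (Finset.sum_eq_zero_iff_of_nonneg (fun F _ => sq_nonneg _)).mp hsum2 _ hmem
  exact sq_eq_zero_iff.mp hz

lemma card_Ecl_eq_card_Ocl (hsum : ∑ i, ∑ j, sgn T i j = 0) (i : Fin n) :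
    (Ecl T i).card = (Ocl T i).card := by
  have hW := all_W_zero T hα₀ hsum i
  have hsplit : Fcl T i = Ecl T i ∪ Ocl T i := by
    ext k
    simp [mem_Fcl, mem_Ecl, mem_Ocl]
  have hdisj : Disjoint (Ecl T i) (Ocl T i) := by
    rw [Finset.disjoint_left]
    intro k hk1 hk2
    exact not_peq_and_pop T hα₀ i k ⟨(mem_Ecl T i k).mp hk1, (mem_Ocl T i k).mp hk2⟩
  rw [W_eq, hsplit, Finset.sum_union hdisj] at hW
  have hE : ∑ j ∈ Ecl T i, chi α₀ j = (Ecl T i).card * chi α₀ i := by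
    rw [Finset.sum_congr rfl (fun j hj => chi_eq_of_peq T hα₀ ((mem_Ecl T i j).mp hj)),
      Finset.sum_const, nsmul_eq_mul]
  have hO : ∑ j ∈ Ocl T i, chi α₀ j = -((Ocl T i).card * chi α₀ i) := by
    rw [Finset.sum_congr rfl (fun j hj => chi_eq_of_pop T hα₀ ((mem_Ocl T i j).mp hj)),
      Finset.sum_const, nsmul_eq_mul]
    ring
  rw [hE, hO] at hW
  have hχ : chi α₀ i ≠ 0 := by unfold chi; cases α₀ i <;> simp
  have : ((Ecl T i).card : ℤ) = (Ocl T i).card := by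
    have h2 : (((Ecl T i).card : ℤ) - (Ocl T i).card) * chi α₀ i = 0 := by linarith
    have := mul_eq_zero.mp h2
    rcases this with h | h
    · linarith
    · exact absurd h hχ
  exact_mod_cast this

end main

noncomputable def pairFun (A B : Finset (Fin n)) (i : Fin n) : Fin n :=
  if h : A.card = B.card then
    if h1 : i ∈ A then ((Finset.equivOfCardEq h) ⟨i, h1⟩ : {x // x ∈ B}).1
    else if h2 : i ∈ B then ((Finset.equivOfCardEq h).symm ⟨i, h2⟩ : {x // x ∈ A}).1
    else i
  else i

section pf
variable {A B : Finset (Fin n)} (hc : A.card = B.card) (hd : Disjoint A B)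
include hc hd

omit hd in
lemma pairFun_mem_left {i : Fin n} (h1 : i ∈ A) : pairFun A B i ∈ B := by
  rw [pairFun, dif_pos hc, dif_pos h1]
  exact ((Finset.equivOfCardEq hc) ⟨i, h1⟩).2

lemma pairFun_mem_right {i : Fin n} (h2 : i ∈ B) : pairFun A B i ∈ A := by
  have h1 : i ∉ A := Finset.disjoint_right.mp hd h2
  rw [pairFun, dif_pos hc, dif_neg h1, dif_pos h2]
  exact ((Finset.equivOfCardEq hc).symm ⟨i, h2⟩).2

lemma pairFun_left_inv {i : Fin n} (h1 : i ∈ A) : pairFun A B (pairFun A B i) = i := by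
  have hj : pairFun A B i ∈ B := pairFun_mem_left hc h1
  have hjA : pairFun A B i ∉ A := Finset.disjoint_right.mp hd hj
  rw [pairFun, dif_pos hc, dif_neg hjA, dif_pos hj]
  have hval : (⟨pairFun A B i, hj⟩ : {x // x ∈ B}) = (Finset.equivOfCardEq hc) ⟨i, h1⟩ := by
    apply Subtype.ext
    show pairFun A B i = _
    rw [pairFun, dif_pos hc, dif_pos h1]
  rw [hval, Equiv.symm_apply_apply]

lemma pairFun_right_inv {i : Fin n} (h2 : i ∈ B) : pairFun A B (pairFun A B i) = i := by
  have h1 : i ∉ A := Finset.disjoint_right.mp hd h2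
  have hj : pairFun A B i ∈ A := pairFun_mem_right hc hd h2
  rw [pairFun, dif_pos hc, dif_pos hj]
  have hval : (⟨pairFun A B i, hj⟩ : {x // x ∈ A}) = (Finset.equivOfCardEq hc).symm ⟨i, h2⟩ := by
    apply Subtype.ext
    show pairFun A B i = _
    rw [pairFun, dif_pos hc, dif_neg h1, dif_pos h2]
  rw [hval, Equiv.apply_symm_apply]

end pf

end Stmt11Aux
open Stmt11Aux in
/-- A nonempty affine set of weight-d strings of length 2d is pairwise opposite: there
is a fixed-point-free pairing (involution) P of the coordinates such that every α in
the set takes opposite values on every pair. -/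
theorem stmt_11 (d : ℕ) (S : Set (Fin (2 * d) → Bool)) (hne : S.Nonempty)
    (haff : ∀ α ∈ S, ∀ β ∈ S, ∀ γ ∈ S,
      (fun i => xor (xor (α i) (β i)) (γ i)) ∈ S)
    (hwt : ∀ α ∈ S, (Finset.univ.filter (fun i => α i = true)).card = d) :
    ∃ p : Fin (2 * d) → Fin (2 * d), Function.Involutive p ∧ (∀ i, p i ≠ i) ∧
      ∀ α ∈ S, ∀ i, α (p i) ≠ α i := by
  classical
  obtain ⟨α₀, hα₀S⟩ := hne
  set T : Finset (Fin (2 * d) → Bool) := Set.Finite.toFinset (Set.toFinite S) with hTdef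
  have hmem : ∀ α, α ∈ T ↔ α ∈ S := fun α => Set.Finite.mem_toFinset _
  have hα₀ : α₀ ∈ T := (hmem α₀).mpr hα₀S
  have haffT : ∀ α ∈ T, ∀ β ∈ T, ∀ γ ∈ T,
      (fun i => xor (xor (α i) (β i)) (γ i)) ∈ T := by
    intro a ha b hb c hc
    exact (hmem _).mpr (haff a ((hmem a).mp ha) b ((hmem b).mp hb) c ((hmem c).mp hc))
  have hwtT : ∀ α ∈ T, (Finset.univ.filter (fun i => α i = true)).card = d :=
    fun α hα => hwt α ((hmem α).mp hα)
  have hsum := sum_sgn_eq_zero T ⟨α₀, hα₀⟩ haffT hwtT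
  have hcards : ∀ i, (Ecl T i).card = (Ocl T i).card :=
    fun i => card_Ecl_eq_card_Ocl T hα₀ hsum i
  have hdisjEO : ∀ i, Disjoint (Ecl T i) (Ocl T i) := by
    intro i
    rw [Finset.disjoint_left]
    intro k hk1 hk2
    exact (mem_Ocl T i k).mp hk2 α₀ hα₀ ((mem_Ecl T i k).mp hk1 α₀ hα₀)
  set A : Fin (2 * d) → Finset (Fin (2 * d)) :=
    fun i => if α₀ i then Ecl T i else Ocl T i with hA
  set B : Fin (2 * d) → Finset (Fin (2 * d)) :=
    fun i => if α₀ i then Ocl T i else Ecl T i with hB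
  have hcAB : ∀ i, (A i).card = (B i).card := by
    intro i
    by_cases h : α₀ i = true
    · simp only [hA, hB, if_pos h]; exact hcards i
    · simp only [hA, hB, if_neg h]; exact (hcards i).symm
  have hdAB : ∀ i, Disjoint (A i) (B i) := by
    intro i
    by_cases h : α₀ i = true
    · simp only [hA, hB, if_pos h]; exact hdisjEO i
    · simp only [hA, hB, if_neg h]; exact (hdisjEO i).symm
  set p : Fin (2 * d) → Fin (2 * d) := fun i => pairFun (A i) (B i) i with hp
  have hpO : ∀ i, p i ∈ Ocl T i := by
    intro i
    show pairFun (A i) (B i) i ∈ Ocl T i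
    by_cases h : α₀ i = true
    · have hBi : B i = Ocl T i := by simp only [hB]; rw [if_pos h]
      have hiA : i ∈ A i := by
        simp only [hA]; rw [if_pos h]; exact mem_Ecl_self T i
      rw [← hBi]; exact pairFun_mem_left (hcAB i) hiA
    · have hAi : A i = Ocl T i := by simp only [hA]; rw [if_neg h]
      have hiB : i ∈ B i := by
        simp only [hB]; rw [if_neg h]; exact mem_Ecl_self T i
      rw [← hAi]; exact pairFun_mem_right (hcAB i) (hdAB i) hiB
  have hpop : ∀ i, Pop T i (p i) := fun i => (mem_Ocl T i (p i)).mp (hpO i)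
  have hflip : ∀ i, α₀ (p i) ≠ α₀ i := fun i => hpop i α₀ hα₀
  have hABp : ∀ i, A (p i) = A i ∧ B (p i) = B i := by
    intro i
    have he := Ecl_pop T i (p i) (hpop i)
    have ho := Ocl_pop T i (p i) (hpop i)
    by_cases h : α₀ i = true
    · have h2 : α₀ (p i) = false := by
        cases hh : α₀ (p i)
        · rfl
        · exact absurd (hh.trans h.symm) (hflip i)
      constructor
      · show A (p i) = A i
        simp only [hA]; rw [if_neg (by rw [h2]; exact Bool.false_ne_true), if_pos h, ho]
      · show B (p i) = B i
        simp only [hB]; rw [if_neg (by rw [h2]; exact Bool.false_ne_true), if_pos h, he]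
    · have h0 : α₀ i = false := by
        cases hh : α₀ i
        · rfl
        · exact absurd hh h
      have h2 : α₀ (p i) = true := by
        cases hh : α₀ (p i)
        · exact absurd (hh.trans h0.symm) (hflip i)
        · rfl
      constructor
      · show A (p i) = A i
        simp only [hA]; rw [if_pos h2, if_neg (by rw [h0]; exact Bool.false_ne_true), he]
      · show B (p i) = B i
        simp only [hB]; rw [if_pos h2, if_neg (by rw [h0]; exact Bool.false_ne_true), ho]
  refine ⟨p, ?_, ?_, ?_⟩
  · intro i
    show pairFun (A (p i)) (B (p i)) (p i) = i
    rw [(hABp i).1, (hABp i).2]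
    by_cases h : α₀ i = true
    · have hiA : i ∈ A i := by
        simp only [hA]; rw [if_pos h]; exact mem_Ecl_self T i
      exact pairFun_left_inv (hcAB i) (hdAB i) hiA
    · have hiB : i ∈ B i := by
        simp only [hB]; rw [if_neg h]; exact mem_Ecl_self T i
      exact pairFun_right_inv (hcAB i) (hdAB i) hiB
  · intro i hpi
    have := hpop i
    rw [hpi] at this
    exact this α₀ hα₀ rfl
  · intro α hαS i
    exact hpop i α ((hmem α).mpr hαS)
end

section
/- Suppose M is a matrix over ℂ whose rows are indexed by all ways of partitioning 2d coordinates into d pairs with chosen orientations consistent with EO evaluations, such that for every nontrivial domain-symmetric EO signature h of arity 2d (viewed as a vector h of its values), Mh ≠ 0. Concretely: if h : {0,1}^{2d} → ℂ is an EO signature with h(ᾱ) = h(α) for all α, and the result of adding d disequality self-loops to h (in every possible way) always gives 0, then h is identically zero. -/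
/-!
Adding a disequality self-loop on two coordinates `i ≠ j` turns `h` into the signature
`y ↦ h(y; 0, 1) + h(y; 1, 0)` on the remaining coordinates. It is again EO and domain-symmetric,
and each of its contractions is a contraction of `h`, so by induction on the arity it vanishes:
swapping two different bits of a string changes the sign of `h`. A balanced string `α` with a one
at `i` and zeros at `j ≠ k` is related to `α ∘ (i j)` and `α ∘ (i k)`, and these to each other,
by such swaps; an odd cycle of sign changes forces `2 h(α) = 0`. If `α` has a single one and a
single zero, the swap is the complement of `α`, and domain symmetry gives `2 h(α) = 0` as well.
-/

open Finset Function

namespace EOSignature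

variable {ι M : Type*} [AddCommGroup M]

abbrev Rest (i j : ι) : Type _ := {k : ι // k ≠ i ∧ k ≠ j}

lemma eq_or_eq_or_exists_rest (i j k : ι) : k = i ∨ k = j ∨ ∃ k' : Rest i j, k = k' := by
  by_cases hki : k = i
  · exact .inl hki
  by_cases hkj : k = j
  · exact .inr (.inl hkj)
  exact .inr (.inr ⟨⟨k, hki, hkj⟩, rfl⟩)

def IsDomainSymmetric (h : (ι → Bool) → M) : Prop := ∀ α, h (fun k => !α k) = h α

section Balanced

variable [Fintype ι]

def IsBalanced (α : ι → Bool) : Prop := #{k | α k = true} = #{k | α k = false}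

def IsEO (h : (ι → Bool) → M) : Prop := ∀ α, h α ≠ 0 → IsBalanced α

lemma card_true_add_card_false (α : ι → Bool) :
    #{k | α k = true} + #{k | α k = false} = Fintype.card ι := by
  simpa using card_filter_add_card_filter_not (s := univ) (fun k => α k = true)

lemma IsBalanced.isEmpty_or_pair_or_triple {α : ι → Bool} (hα : IsBalanced α) :
    IsEmpty ι ∨ (∃ i j, α j = !α i ∧ ∀ k, k = i ∨ k = j) ∨
      ∃ i j k, α j = !α i ∧ α k = !α i ∧ j ≠ k := by
  have hcard := card_true_add_card_false α
  unfold IsBalanced at hα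
  obtain h0 | h1 | h2 : #{k | α k = true} = 0 ∨ #{k | α k = true} = 1 ∨
      1 < #{k | α k = true} := by omega
  · exact .inl (Fintype.card_eq_zero_iff.mp (by omega))
  · obtain ⟨i, hi⟩ := card_eq_one.mp h1
    obtain ⟨j, hj⟩ := card_eq_one.mp (hα ▸ h1)
    have hi' : ∀ k, α k = true ↔ k = i := fun k => by simpa using Finset.ext_iff.mp hi k
    have hj' : ∀ k, α k = false ↔ k = j := fun k => by simpa using Finset.ext_iff.mp hj k
    refine .inr (.inl ⟨i, j, by simp [(hi' i).2 rfl, (hj' j).2 rfl], fun k => ?_⟩)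
    cases hk : α k
    · exact .inr ((hj' k).1 hk)
    · exact .inl ((hi' k).1 hk)
  · obtain ⟨j, hj, k, hk, hjk⟩ := one_lt_card.mp (hα ▸ h2)
    obtain ⟨i, hi⟩ := card_pos.mp (by omega : 0 < #{k | α k = true})
    simp only [mem_filter, mem_univ, true_and] at hi hj hk
    exact .inr (.inr ⟨i, j, k, by simp [hi, hj], by simp [hi, hk], hjk⟩)

end Balanced

variable [DecidableEq ι]

section Rest

variable {i j : ι}

def extend (y : Rest i j → Bool) (a b : Bool) : ι → Bool :=
  fun k => if hi : k = i then a else if hj : k = j then b else y ⟨k, hi, hj⟩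

def liftPairing (q : Rest i j → Rest i j) : ι → ι :=
  fun k => if hi : k = i then j else if hj : k = j then i else q ⟨k, hi, hj⟩

@[simp] lemma extend_left (y : Rest i j → Bool) (a b : Bool) : extend y a b i = a := by
  simp [extend]

@[simp] lemma extend_right (hij : i ≠ j) (y : Rest i j → Bool) (a b : Bool) :
    extend y a b j = b := by
  simp [extend, hij.symm]

@[simp] lemma extend_rest (y : Rest i j → Bool) (a b : Bool) (k : Rest i j) :
    extend y a b k = y k := by
  simp [extend, k.2.1, k.2.2]

lemma extend_restrict (α : ι → Bool) : extend (fun k : Rest i j => α k) (α i) (α j) = α := by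
  funext k
  unfold extend
  split_ifs <;> simp_all

lemma not_extend (y : Rest i j → Bool) (a b : Bool) :
    (fun k => !extend y a b k) = extend (fun k => !y k) (!a) (!b) := by
  funext k
  unfold extend
  split_ifs <;> rfl

lemma extend_comp_swap (hij : i ≠ j) (y : Rest i j → Bool) (a b : Bool) :
    extend y a b ∘ Equiv.swap i j = extend y b a := by
  funext k
  obtain rfl | rfl | ⟨k, rfl⟩ := eq_or_eq_or_exists_rest i j k
  · simp [hij]
  · simp [hij]
  · simp [Equiv.swap_apply_of_ne_of_ne k.2.1 k.2.2]

@[simp] lemma liftPairing_left (q : Rest i j → Rest i j) : liftPairing q i = j := by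
  simp [liftPairing]

@[simp] lemma liftPairing_right (hij : i ≠ j) (q : Rest i j → Rest i j) :
    liftPairing q j = i := by
  simp [liftPairing, hij.symm]

@[simp] lemma liftPairing_rest (q : Rest i j → Rest i j) (k : Rest i j) :
    liftPairing q k = q k := by
  simp [liftPairing, k.2.1, k.2.2]

lemma liftPairing_involutive (hij : i ≠ j) {q : Rest i j → Rest i j} (hq : Involutive q) :
    Involutive (liftPairing q) := by
  intro k
  obtain rfl | rfl | ⟨k, rfl⟩ := eq_or_eq_or_exists_rest i j k
  · simp [hij]
  · simp [hij]
  · simp [hq k]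

lemma liftPairing_ne (hij : i ≠ j) {q : Rest i j → Rest i j} (hq : ∀ k, q k ≠ k) (k : ι) :
    liftPairing q k ≠ k := by
  obtain rfl | rfl | ⟨k, rfl⟩ := eq_or_eq_or_exists_rest i j k
  · simp [hij.symm]
  · simp [hij]
  · simpa [Subtype.ext_iff] using hq k

def selfLoop (h : (ι → Bool) → M) (i j : ι) (y : Rest i j → Bool) : M :=
  ∑ a, h (extend y a !a)

variable {h : (ι → Bool) → M}

lemma IsDomainSymmetric.selfLoop (hh : IsDomainSymmetric h) :
    IsDomainSymmetric (selfLoop h i j) := by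
  intro y
  have hnot : ∀ a, h (extend (fun k => !y k) a !a) = h (extend y (!a) a) := fun a => by
    rw [← hh (extend y (!a) a), not_extend, Bool.not_not]
  simp only [EOSignature.selfLoop, hnot, Fintype.sum_bool, Bool.not_true, Bool.not_false,
    add_comm]

lemma selfLoop_restrict {α : ι → Bool} (hα : α j = !α i) :
    selfLoop h i j (fun k => α k) = h α + h (α ∘ Equiv.swap i j) := by
  have hij : i ≠ j := by rintro rfl; simp at hα
  have hsum : ∀ (b : Bool) (f : Bool → M), ∑ a, f a = f b + f !b := by
    intro b f; cases b <;> simp [add_comm]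
  have hswap : extend (fun k : Rest i j => α k) (!α i) (α i) = α ∘ Equiv.swap i j := by
    rw [← extend_comp_swap hij, ← hα, extend_restrict]
  rw [selfLoop, hsum (α i), ← hα, extend_restrict, hα, Bool.not_not, hswap]

end Rest

section Contraction

variable [Fintype ι]

def contraction (h : (ι → Bool) → M) (p : ι → ι) : M := ∑ α with ∀ k, α (p k) = !α k, h α

def AllContractionsVanish (h : (ι → Bool) → M) : Prop :=
  ∀ p : ι → ι, Involutive p → (∀ k, p k ≠ k) → contraction h p = 0

lemma apply_eq_zero_of_isEmpty [IsEmpty ι] {h : (ι → Bool) → M} (hzero : AllContractionsVanish h)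
    (α : ι → Bool) : h α = 0 := by
  have h₀ := hzero id (fun _ => rfl) isEmptyElim
  rwa [contraction, filter_true_of_mem (fun β _ => isEmptyElim),
    Fintype.sum_subsingleton _ α] at h₀

variable {i j : ι}

lemma sum_eq_add_add_sum_rest {N : Type*} [AddCommMonoid N] (hij : i ≠ j) (F : ι → N) :
    ∑ k, F k = F i + F j + ∑ k : Rest i j, F k := by
  rw [← Fintype.sum_subtype_add_sum_subtype (fun k => k ≠ i ∧ k ≠ j) F, add_comm,
    ← sum_subtype {i, j} (by simp [or_iff_not_and_not]), sum_pair hij]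

lemma card_extend (hij : i ≠ j) (y : Rest i j → Bool) (a b c : Bool) :
    #{k | extend y a b k = c} =
      #{k | y k = c} + (if a = c then 1 else 0) + (if b = c then 1 else 0) := by
  rw [card_filter, card_filter, sum_eq_add_add_sum_rest hij]
  simp only [extend_left, extend_right hij, extend_rest]
  ring

lemma isBalanced_extend_iff (hij : i ≠ j) (y : Rest i j → Bool) (a : Bool) :
    IsBalanced (extend y a !a) ↔ IsBalanced y := by
  simp only [IsBalanced, card_extend hij]
  cases a <;> simp

lemma contraction_liftPairing (hij : i ≠ j) (h : (ι → Bool) → M) (q : Rest i j → Rest i j) :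
    contraction h (liftPairing q) = contraction (selfLoop h i j) q := by
  have hrestrict : ∀ α ∈ ({α | ∀ k, α (liftPairing q k) = !α k} : Finset (ι → Bool)),
      extend (fun k : Rest i j => α k) (α i) (!α i) = α := fun α hα => by
    have hj : α j = !α i := by simpa using (mem_filter.mp hα).2 i
    rw [← hj, extend_restrict]
  simp only [contraction, selfLoop]
  rw [← sum_product']
  refine sum_nbij' (fun α => ((fun k : Rest i j => α k), α i)) (fun x => extend x.1 x.2 !x.2)
    ?_ ?_ ?_ ?_ ?_
  · intro α hα
    simp only [mem_filter, mem_product, mem_univ, true_and, and_true] at hα ⊢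
    intro k
    simpa using hα k
  · rintro ⟨y, a⟩ hy
    simp only [mem_filter, mem_product, mem_univ, true_and, and_true] at hy ⊢
    intro k
    obtain rfl | rfl | ⟨k, rfl⟩ := eq_or_eq_or_exists_rest i j k
    · simp [hij]
    · simp [hij]
    · simpa using hy k
  · exact hrestrict
  · rintro ⟨y, a⟩ -
    simp
  · intro α hα
    rw [hrestrict α hα]

variable {h : (ι → Bool) → M}

lemma IsEO.selfLoop (hij : i ≠ j) (hh : IsEO h) : IsEO (selfLoop h i j) := by
  intro y hy
  obtain ⟨a, -, ha⟩ := exists_ne_zero_of_sum_ne_zero hy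
  exact (isBalanced_extend_iff hij y a).1 (hh _ ha)

lemma AllContractionsVanish.selfLoop (hij : i ≠ j) (hh : AllContractionsVanish h) :
    AllContractionsVanish (selfLoop h i j) := fun q hq hq' => by
  rw [← contraction_liftPairing hij]
  exact hh _ (liftPairing_involutive hij hq) (liftPairing_ne hij hq')

end Contraction

section Swap

variable [IsAddTorsionFree M] {h : (ι → Bool) → M}

lemma apply_eq_zero_of_triangle
    (hswap : ∀ (α : ι → Bool) (i j : ι), α j = !α i → h α + h (α ∘ Equiv.swap i j) = 0)
    {α : ι → Bool} {i j k : ι} (hj : α j = !α i) (hk : α k = !α i) (hjk : j ≠ k) :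
    h α = 0 := by
  have hij : i ≠ j := by rintro rfl; simp at hj
  have hik : i ≠ k := by rintro rfl; simp at hk
  have hcycle : α ∘ Equiv.swap i j ∘ Equiv.swap j k = α ∘ Equiv.swap i k := by
    funext x
    simp only [comp_apply, Equiv.swap_apply_def]
    split_ifs <;> simp_all
  have e₁ := hswap α i j hj
  have e₂ := hswap α i k hk
  have e₃ := hswap (α ∘ Equiv.swap i j) j k
    (by simp [Equiv.swap_apply_of_ne_of_ne hik.symm hjk.symm, hk])
  rw [comp_assoc, hcycle] at e₃
  refine two_nsmul_eq_zero.mp ?_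
  calc 2 • h α = (h α + h (α ∘ Equiv.swap i j))
          - (h (α ∘ Equiv.swap i j) + h (α ∘ Equiv.swap i k))
          + (h α + h (α ∘ Equiv.swap i k)) := by abel
    _ = 0 := by rw [e₁, e₂, e₃]; abel

lemma apply_eq_zero_of_pair
    (hswap : ∀ (α : ι → Bool) (i j : ι), α j = !α i → h α + h (α ∘ Equiv.swap i j) = 0)
    (hsym : IsDomainSymmetric h) {α : ι → Bool} {i j : ι} (hj : α j = !α i)
    (hij : ∀ k, k = i ∨ k = j) : h α = 0 := by
  have hflip : α ∘ Equiv.swap i j = fun k => !α k := by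
    funext k
    rcases hij k with rfl | rfl <;> simp [hj]
  have e := hswap α i j hj
  rw [hflip, hsym] at e
  exact two_nsmul_eq_zero.mp (by rw [two_nsmul, e])

end Swap

theorem eq_zero_of_allContractionsVanish [Fintype ι] [IsAddTorsionFree M] {h : (ι → Bool) → M}
    (hEO : IsEO h) (hsym : IsDomainSymmetric h) (hzero : AllContractionsVanish h) : h = 0 := by
  induction hn : Fintype.card ι using Nat.strong_induction_on generalizing ι with
  | _ n IH =>
  have hswap : ∀ (α : ι → Bool) (i j : ι), α j = !α i → h α + h (α ∘ Equiv.swap i j) = 0 := by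
    intro α i j hα
    have hij : i ≠ j := by rintro rfl; simp at hα
    have hlt : Fintype.card (Rest i j) < n := hn ▸ Fintype.card_subtype_lt (x := i) (by simp)
    rw [← selfLoop_restrict hα,
      IH _ hlt (hEO.selfLoop hij) hsym.selfLoop (hzero.selfLoop hij) rfl, Pi.zero_apply]
  funext α
  by_contra hα
  rcases (hEO α hα).isEmpty_or_pair_or_triple with _ | ⟨i, j, hj, hij⟩ | ⟨i, j, k, hj, hk, hjk⟩
  · exact hα (apply_eq_zero_of_isEmpty hzero α)
  · exact hα (apply_eq_zero_of_pair hswap hsym hj hij)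
  · exact hα (apply_eq_zero_of_triangle hswap hj hk hjk)

end EOSignature

/-- A nontrivial domain-symmetric EO signature has some nonzero full contraction:
if for every fixed-point-free pairing p the sum of h over all assignments alternating
on each pair vanishes, then h is identically zero. -/
theorem stmt_12 (d : ℕ) (h : (Fin (2 * d) → Bool) → ℂ)
    (hEO : ∀ α, h α ≠ 0 → (Finset.univ.filter (fun i => α i = true)).card = d)
    (hDsym : ∀ α, h (fun i => !(α i)) = h α)
    (hzero : ∀ p : Fin (2 * d) → Fin (2 * d), Function.Involutive p → (∀ i, p i ≠ i) →
      ∑ α ∈ Finset.univ.filter (fun α : Fin (2 * d) → Bool => ∀ i, α (p i) = !(α i)),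
        h α = 0) :
    ∀ α, h α = 0 := by
  have hbalanced : EOSignature.IsEO h := fun α hα => by
    have hcard := EOSignature.card_true_add_card_false α
    rw [Fintype.card_fin] at hcard
    have := hEO α hα
    unfold EOSignature.IsBalanced
    omega
  refine congrFun (EOSignature.eq_zero_of_allContractionsVanish hbalanced hDsym
    fun p hp hpf => ?_)
  rw [EOSignature.contraction]
  -- the two sums differ only in the `Decidable` instance of the filter predicate
  convert hzero p hp hpf
end
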